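/- Let f₁, …, f_n : ℝ^p → ℝ be differentiable with L-Lipschitz gradients, and suppose each f_i is twice differentiable with Hessian ∇²f_i(x) ⪰ μI for all x, where 0 < μ. Let W be a real n×n matrix with W𝟙 = 𝟙 and set η = ‖I − W‖ (ℓ₂ operator norm). Let X, X̂ ∈ ℝ^{n×p} with rows x_i, x̂_i, let x̄ = (1/n)∑ᵢ xᵢ, let y₁, …, y_n ∈ ℝ^p, set d_i = (∇²f_i(x_i))⁻¹ y_i and let D ∈ ℝ^{n×p} have rows d_i. Define X⁺ = X − γ·(I − W)·X̂ − ε·D with rows x_i⁺. Then ∑ᵢ ‖∇f_i(x_i⁺) − ∇f_i(x_i)‖² ≤ 3L²γ²η²‖X − X̂‖² + 3L²γ²η²‖X − 𝟙x̄‖² + (3L²ε²/μ²)·∑ᵢ ‖y_i‖², where ‖·‖ on n×p matrices is the Frobenius norm ‖Z‖ = (∑ᵢ ‖zᵢ‖²)^{1/2} with zᵢ the rows of Z. -/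

import Mathlib

/-!
Because the rows of `W` sum to one, `I - W` annihilates the consensus matrix `𝟙 x̄ᵀ`, so the
displacement splits as `X⁺ - X = γ (I - W)(X - X̂) - γ (I - W)(X - 𝟙 x̄ᵀ) - ε D`. The Lipschitz
gradients turn the left-hand side into at most `L² ‖X⁺ - X‖²` (Frobenius norm),
`‖a + b + c‖² ≤ 3 (‖a‖² + ‖b‖² + ‖c‖²)` separates the three terms, `‖(I - W) M‖ ≤ η ‖M‖` bounds
the first two, and `∇² f_i ⪰ μ I` gives `μ ‖d_i‖ ≤ ‖y_i‖`.
-/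

open scoped Matrix

noncomputable def frobeniusNorm {n p : ℕ} (Z : Matrix (Fin n) (Fin p) ℝ) : ℝ :=
  Real.sqrt (∑ i, ∑ j, (Z i j) ^ 2)

attribute [local instance] Matrix.frobeniusSeminormedAddCommGroup Matrix.frobeniusNormSMulClass

lemma norm_add_add_sq_le {E : Type*} [SeminormedAddCommGroup E] (a b c : E) :
    ‖a + b + c‖ ^ 2 ≤ 3 * (‖a‖ ^ 2 + ‖b‖ ^ 2 + ‖c‖ ^ 2) := by
  have h : ‖a + b + c‖ ≤ ‖a‖ + ‖b‖ + ‖c‖ := norm_add₃_le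
  nlinarith [norm_nonneg (a + b + c), sq_nonneg (‖a‖ - ‖b‖), sq_nonneg (‖b‖ - ‖c‖),
    sq_nonneg (‖a‖ - ‖c‖)]

namespace Matrix

lemma frobenius_norm_sq_eq_sum_norm_sq_rows {m n α : Type*} [Fintype m] [Fintype n]
    [SeminormedAddCommGroup α] (A : Matrix m n α) :
    ‖A‖ ^ 2 = ∑ i, ‖WithLp.toLp 2 (A i)‖ ^ 2 :=
  PiLp.norm_sq_eq_of_L2 _ (WithLp.toLp 2 fun i => WithLp.toLp 2 (A i))

lemma frobenius_norm_mul_le_norm_toEuclideanCLM_mul {m p 𝕜 : Type*} [Fintype m] [Fintype p] [DecidableEq m]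
    [RCLike 𝕜] (A : Matrix m m 𝕜) (M : Matrix m p 𝕜) :
    ‖A * M‖ ≤ ‖toEuclideanCLM (𝕜 := 𝕜) A‖ * ‖M‖ := by
  have hcol : ∀ j, (A * M)ᵀ j = A *ᵥ Mᵀ j := fun j => by
    ext i; simp [mul_apply, mulVec, dotProduct]
  rw [← frobenius_norm_transpose, ← frobenius_norm_transpose M, ← sq_le_sq₀ (by positivity)
    (by positivity), mul_pow, frobenius_norm_sq_eq_sum_norm_sq_rows,
    frobenius_norm_sq_eq_sum_norm_sq_rows, Finset.mul_sum]
  gcongr with j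
  rw [hcol, ← toEuclideanCLM_toLp, ← mul_pow]
  gcongr
  exact ContinuousLinearMap.le_opNorm _ _

lemma mul_replicateRow_of_sum_eq_one {m n p R : Type*} [Fintype n] [NonAssocSemiring R]
    {W : Matrix m n R} (hW : ∀ i, ∑ j, W i j = 1) (v : p → R) :
    W * replicateRow n v = replicateRow m v := by
  ext i j
  simp [mul_apply, replicateRow, ← Finset.sum_mul, hW i]

end Matrix

lemma sum_norm_sq_sub_le_of_lipschitz {m p F : Type*} [Fintype m] [Fintype p]
    [SeminormedAddCommGroup F] {g : m → EuclideanSpace ℝ p → F} {L : ℝ}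
    (hg : ∀ i a b, ‖g i a - g i b‖ ≤ L * ‖a - b‖) (A B : Matrix m p ℝ) :
    ∑ i, ‖g i (WithLp.toLp 2 (A i)) - g i (WithLp.toLp 2 (B i))‖ ^ 2 ≤ L ^ 2 * ‖A - B‖ ^ 2 := by
  rw [Matrix.frobenius_norm_sq_eq_sum_norm_sq_rows, Finset.mul_sum]
  gcongr with i
  rw [← mul_pow]
  gcongr
  exact hg i _ _

lemma frobeniusNorm_eq_norm {n p : ℕ} (Z : Matrix (Fin n) (Fin p) ℝ) : frobeniusNorm Z = ‖Z‖ := by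
  rw [frobeniusNorm, ← Real.sqrt_sq (norm_nonneg Z), Matrix.frobenius_norm_sq_eq_sum_norm_sq_rows]
  simp [EuclideanSpace.real_norm_sq_eq]

namespace Matrix.PosSemidef

variable {p : Type*} [Fintype p] [DecidableEq p] {μ : ℝ} {H : Matrix p p ℝ}

lemma mul_norm_le_norm_mulVec (h : (H - μ • 1).PosSemidef) (u : p → ℝ) :
    μ * ‖WithLp.toLp 2 u‖ ≤ ‖WithLp.toLp 2 (H *ᵥ u)‖ := by
  have hquad : μ * ‖WithLp.toLp 2 u‖ ^ 2 ≤ u ⬝ᵥ (H *ᵥ u) := by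
    have := h.dotProduct_mulVec_nonneg u
    simp only [sub_mulVec, smul_mulVec, one_mulVec, dotProduct_sub,
      dotProduct_smul, star_trivial, smul_eq_mul, sub_nonneg] at this
    rw [EuclideanSpace.real_norm_sq_eq]
    simpa [dotProduct, sq] using this
  have hcs : u ⬝ᵥ (H *ᵥ u) ≤ ‖WithLp.toLp 2 u‖ * ‖WithLp.toLp 2 (H *ᵥ u)‖ := by
    have := real_inner_le_norm (WithLp.toLp 2 u : EuclideanSpace ℝ p) (WithLp.toLp 2 (H *ᵥ u))
    simpa [PiLp.inner_apply, dotProduct, mul_comm] using this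
  rcases (norm_nonneg (WithLp.toLp 2 u : EuclideanSpace ℝ p)).eq_or_lt with h0 | hpos
  · rw [← h0, mul_zero]; exact norm_nonneg _
  · nlinarith

lemma mul_norm_inv_mulVec_le (h : (H - μ • 1).PosSemidef) (hμ : 0 < μ) (v : p → ℝ) :
    μ * ‖WithLp.toLp 2 (H⁻¹ *ᵥ v)‖ ≤ ‖WithLp.toLp 2 v‖ := by
  have hunit : IsUnit H := by
    refine mulVec_injective_iff_isUnit.mp fun u w huw => ?_
    have := h.mul_norm_le_norm_mulVec (u - w)
    rw [mulVec_sub, huw, sub_self, WithLp.toLp_zero, norm_zero] at this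
    simpa [sub_eq_zero] using norm_le_zero_iff.mp (nonpos_of_mul_nonpos_right this hμ)
  simpa [mulVec_mulVec, mul_nonsing_inv _ ((isUnit_iff_isUnit_det H).mp hunit)]
    using h.mul_norm_le_norm_mulVec (H⁻¹ *ᵥ v)

end Matrix.PosSemidef

theorem stacked_gradient_change_bound_general (n p : ℕ) (μ L γ ε η : ℝ) (hμ : 0 < μ)
    (f : Fin n → EuclideanSpace ℝ (Fin p) → ℝ)
    (hlip : ∀ i (a b : EuclideanSpace ℝ (Fin p)),
      ‖gradient (f i) a - gradient (f i) b‖ ≤ L * ‖a - b‖)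
    (Hs : Fin n → EuclideanSpace ℝ (Fin p) → Matrix (Fin p) (Fin p) ℝ)
    (hHsPSD : ∀ i x, (Hs i x - μ • 1).PosSemidef)
    (W : Matrix (Fin n) (Fin n) ℝ) (hW : ∀ i, ∑ j, W i j = 1)
    (hη : η = ‖(Matrix.toEuclideanCLM (𝕜 := ℝ) (1 - W) :
      EuclideanSpace ℝ (Fin n) →L[ℝ] EuclideanSpace ℝ (Fin n))‖)
    (X Xh : Matrix (Fin n) (Fin p) ℝ)
    (x : Fin n → EuclideanSpace ℝ (Fin p))
    (hx : ∀ i, x i = (WithLp.equiv 2 (Fin p → ℝ)).symm (X i))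
    (xbar : EuclideanSpace ℝ (Fin p))
    (y : Fin n → EuclideanSpace ℝ (Fin p))
    (D : Matrix (Fin n) (Fin p) ℝ)
    (hD : ∀ i, D i = ((Hs i (x i))⁻¹).mulVec ((WithLp.equiv 2 (Fin p → ℝ)) (y i)))
    (Xp : Matrix (Fin n) (Fin p) ℝ)
    (hXp : Xp = X - γ • ((1 - W) * Xh) - ε • D)
    (xp : Fin n → EuclideanSpace ℝ (Fin p))
    (hxp : ∀ i, xp i = (WithLp.equiv 2 (Fin p → ℝ)).symm (Xp i)) :
    ∑ i, ‖gradient (f i) (xp i) - gradient (f i) (x i)‖ ^ 2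
      ≤ 3 * L ^ 2 * γ ^ 2 * η ^ 2 * frobeniusNorm (X - Xh) ^ 2
        + 3 * L ^ 2 * γ ^ 2 * η ^ 2
            * frobeniusNorm (X - Matrix.of fun _ j => xbar j) ^ 2
        + (3 * L ^ 2 * ε ^ 2 / μ ^ 2) * ∑ i, ‖y i‖ ^ 2 := by
  set B : Matrix (Fin n) (Fin p) ℝ := Matrix.of fun _ j => xbar j
  have hcons : (1 - W) * B = 0 := by
    rw [Matrix.sub_mul, Matrix.one_mul, sub_eq_zero]
    -- `B` is `Matrix.replicateRow (Fin n) xbar.ofLp` up to unfolding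
    exact (Matrix.mul_replicateRow_of_sum_eq_one hW xbar.ofLp).symm
  have hstep : Xp - X = γ • ((1 - W) * (X - Xh)) + (-γ) • ((1 - W) * (X - B)) + (-ε) • D := by
    simp only [hXp, Matrix.mul_sub, hcons]
    module
  have hDy : ‖D‖ ^ 2 ≤ (∑ i, ‖y i‖ ^ 2) / μ ^ 2 := by
    rw [Matrix.frobenius_norm_sq_eq_sum_norm_sq_rows, Finset.sum_div]
    gcongr with i
    rw [le_div_iff₀ (by positivity), ← mul_pow, mul_comm]
    gcongr
    simpa [hD i] using (hHsPSD i (x i)).mul_norm_inv_mulVec_le hμ (y i).ofLp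
  have hmix : ∀ M : Matrix (Fin n) (Fin p) ℝ, ‖(1 - W) * M‖ ≤ η * ‖M‖ := fun M => by
    rw [hη]; exact Matrix.frobenius_norm_mul_le_norm_toEuclideanCLM_mul _ _
  rw [frobeniusNorm_eq_norm, frobeniusNorm_eq_norm]
  simp only [hxp, hx, WithLp.equiv_symm_apply]
  calc _ ≤ L ^ 2 * ‖Xp - X‖ ^ 2 := sum_norm_sq_sub_le_of_lipschitz hlip Xp X
    _ ≤ L ^ 2 * (3 * (‖γ • ((1 - W) * (X - Xh))‖ ^ 2 + ‖(-γ) • ((1 - W) * (X - B))‖ ^ 2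
        + ‖(-ε) • D‖ ^ 2)) := by
      rw [hstep]; gcongr; exact norm_add_add_sq_le _ _ _
    _ = 3 * L ^ 2 * (γ ^ 2 * ‖(1 - W) * (X - Xh)‖ ^ 2 + γ ^ 2 * ‖(1 - W) * (X - B)‖ ^ 2
        + ε ^ 2 * ‖D‖ ^ 2) := by
      simp only [norm_smul, mul_pow, Real.norm_eq_abs, sq_abs, abs_neg]; ring
    _ ≤ 3 * L ^ 2 * (γ ^ 2 * (η * ‖X - Xh‖) ^ 2 + γ ^ 2 * (η * ‖X - B‖) ^ 2
        + ε ^ 2 * ((∑ i, ‖y i‖ ^ 2) / μ ^ 2)) := by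
      gcongr <;> exact hmix _
    _ = _ := by ring

/-- Bound on the change of the stacked gradient across one CONGO update. -/
theorem stacked_gradient_change_bound (n p : ℕ) (μ L γ ε η : ℝ) (hμ : 0 < μ)
    (f : Fin n → EuclideanSpace ℝ (Fin p) → ℝ)
    (hdiff : ∀ i, Differentiable ℝ (f i))
    (hlip : ∀ i (a b : EuclideanSpace ℝ (Fin p)),
      ‖gradient (f i) a - gradient (f i) b‖ ≤ L * ‖a - b‖)
    (Hs : Fin n → EuclideanSpace ℝ (Fin p) → Matrix (Fin p) (Fin p) ℝ)
    (hHess : ∀ i x, HasFDerivAt (gradient (f i))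
      (LinearMap.toContinuousLinearMap (Matrix.toEuclideanLin (Hs i x))) x)
    (hHsPSD : ∀ i x, (Hs i x - μ • 1).PosSemidef)
    (W : Matrix (Fin n) (Fin n) ℝ) (hW : ∀ i, ∑ j, W i j = 1)
    (hη : η = ‖(Matrix.toEuclideanCLM (𝕜 := ℝ) (1 - W) :
      EuclideanSpace ℝ (Fin n) →L[ℝ] EuclideanSpace ℝ (Fin n))‖)
    (X Xh : Matrix (Fin n) (Fin p) ℝ)
    (x : Fin n → EuclideanSpace ℝ (Fin p))
    (hx : ∀ i, x i = (WithLp.equiv 2 (Fin p → ℝ)).symm (X i))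
    (xbar : EuclideanSpace ℝ (Fin p)) (hxbar : xbar = (1 / (n : ℝ)) • ∑ i, x i)
    (y : Fin n → EuclideanSpace ℝ (Fin p))
    (D : Matrix (Fin n) (Fin p) ℝ)
    (hD : ∀ i, D i = ((Hs i (x i))⁻¹).mulVec ((WithLp.equiv 2 (Fin p → ℝ)) (y i)))
    (Xp : Matrix (Fin n) (Fin p) ℝ)
    (hXp : Xp = X - γ • ((1 - W) * Xh) - ε • D)
    (xp : Fin n → EuclideanSpace ℝ (Fin p))
    (hxp : ∀ i, xp i = (WithLp.equiv 2 (Fin p → ℝ)).symm (Xp i)) :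
    ∑ i, ‖gradient (f i) (xp i) - gradient (f i) (x i)‖ ^ 2
      ≤ 3 * L ^ 2 * γ ^ 2 * η ^ 2 * frobeniusNorm (X - Xh) ^ 2
        + 3 * L ^ 2 * γ ^ 2 * η ^ 2
            * frobeniusNorm (X - Matrix.of fun _ j => xbar j) ^ 2
        + (3 * L ^ 2 * ε ^ 2 / μ ^ 2) * ∑ i, ‖y i‖ ^ 2 :=
  stacked_gradient_change_bound_general n p μ L γ ε η hμ f hlip Hs hHsPSD W hW hη X Xh x hx xbar y D
    hD Xp hXp xp hxp
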